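/- arXiv:2401.17908 — 3 statements merged into one kernel-verified Lean document; each statement's English description precedes it below -/
import Mathlib

section
/- If T is a bounded invertible positive operator on a Hilbert space H, Π is a bounded invertible operator on H, and Ẑ is the map X ↦ Z X Z⁻¹ with Z = T⁻² Π† T², then for all bounded operators X, Y and unit vectors Ω_s, Ω_t with Π Ω_s = Ω_t and Z⁻¹ Ω_s = Ω_t, one has (X, Ẑ Y)_s = (Π̂ X, Y)_t, where (A,B)_θ = ⟨T_θ A Ω_θ, T_θ B Ω_θ⟩ and Π̂ X = Π X Π⁻¹. -/
/-! The factor `T_s⁻²` in `Z` cancels against `T_s` on both sides of the inner product, because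
`T_s` is symmetric with right inverse `T_s⁻¹`; moving `Π†` across the inner product and splitting
`T_t²` between the two sides leaves `⟨T_t Π X Ω_s, T_t Y Ω_t⟩`, and `Π X Π⁻¹ Ω_t = Π X Ω_s`. -/

open ContinuousLinearMap

section

variable {𝕜 E : Type*} [RCLike 𝕜] [NormedAddCommGroup E] [InnerProductSpace 𝕜 E]

theorem LinearMap.IsSymmetric.inner_map_map_rightInverse_rightInverse {T S : E →L[𝕜] E}
    (hT : (T : E →ₗ[𝕜] E).IsSymmetric) (hS : T ∘L S = 1) (x y : E) :
    inner 𝕜 (T x) (T (S (S y))) = inner 𝕜 x y := by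
  have hTS (v : E) : T (S v) = v := by simpa using DFunLike.congr_fun hS v
  rw [hTS, hT.apply_clm, hTS]

theorem LinearMap.IsSymmetric.inner_map_map_dualTransport [CompleteSpace E]
    {T S T' : E →L[𝕜] E} (hT : (T : E →ₗ[𝕜] E).IsSymmetric) (hS : T ∘L S = 1)
    (hT' : (T' : E →ₗ[𝕜] E).IsSymmetric) (P : E →L[𝕜] E) (x w : E) :
    inner 𝕜 (T x) (T ((S ∘L S ∘L ContinuousLinearMap.adjoint P ∘L T' ∘L T') w)) =
      inner 𝕜 (T' (P x)) (T' w) := by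
  simp only [ContinuousLinearMap.comp_apply]
  rw [hT.inner_map_map_rightInverse_rightInverse hS, ContinuousLinearMap.adjoint_inner_right,
    hT'.apply_clm]

end

theorem stmt_0_general {H : Type*} [NormedAddCommGroup H] [InnerProductSpace ℂ H] [CompleteSpace H]
    (Ts Tsinv Tt : H →L[ℂ] H)
    (hTsinv : Ts ∘L Tsinv = 1)
    (hTspos : Ts.IsPositive) (hTtpos : Tt.IsPositive)
    (P Pinv : H →L[ℂ] H)
    (hP' : Pinv ∘L P = 1)
    (Ωs Ωt : H)
    (hPΩ : P Ωs = Ωt)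
    (Z Zinv : H →L[ℂ] H)
    (hZ : Z = Tsinv ∘L Tsinv ∘L (adjoint P) ∘L Tt ∘L Tt)
    (hZΩ : Zinv Ωs = Ωt)
    (X Y : H →L[ℂ] H) :
    (inner ℂ (Ts (X Ωs)) (Ts ((Z ∘L Y ∘L Zinv) Ωs)) : ℂ)
      = inner ℂ (Tt ((P ∘L X ∘L Pinv) Ωt)) (Tt (Y Ωt)) := by
  have hPinvΩt : Pinv Ωt = Ωs := by simpa [hPΩ] using DFunLike.congr_fun hP' Ωs
  rw [comp_apply, comp_apply, hZΩ, comp_apply, comp_apply, hPinvΩt, hZ]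
  exact LinearMap.IsSymmetric.inner_map_map_dualTransport hTspos.isSymmetric hTsinv
    hTtpos.isSymmetric P (X Ωs) (Y Ωt)

/-- adjoint relation `(X, Ẑ Y)_s = (Π̂ X, Y)_t` for the candidate dual
transport `Z = T_s⁻² Π† T_t²`. -/
theorem stmt_0 {H : Type*} [NormedAddCommGroup H] [InnerProductSpace ℂ H] [CompleteSpace H]
    (Ts Tsinv Tt Ttinv : H →L[ℂ] H)
    (hTsinv : Ts ∘L Tsinv = 1) (hTsinv' : Tsinv ∘L Ts = 1)
    (hTtinv : Tt ∘L Ttinv = 1) (hTtinv' : Ttinv ∘L Tt = 1)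
    (hTspos : Ts.IsPositive) (hTtpos : Tt.IsPositive)
    (P Pinv : H →L[ℂ] H)
    (hP : P ∘L Pinv = 1) (hP' : Pinv ∘L P = 1)
    (Ωs Ωt : H) (hΩs : ‖Ωs‖ = 1) (hΩt : ‖Ωt‖ = 1)
    (hPΩ : P Ωs = Ωt)
    (Z Zinv : H →L[ℂ] H)
    (hZ : Z = Tsinv ∘L Tsinv ∘L (adjoint P) ∘L Tt ∘L Tt)
    (hZZ : Z ∘L Zinv = 1) (hZZ' : Zinv ∘L Z = 1)
    (hZΩ : Zinv Ωs = Ωt)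
    (X Y : H →L[ℂ] H) :
    (inner ℂ (Ts (X Ωs)) (Ts ((Z ∘L Y ∘L Zinv) Ωs)) : ℂ)
      = inner ℂ (Tt ((P ∘L X ∘L Pinv) Ωt)) (Tt (Y Ωt)) :=
  stmt_0_general Ts Tsinv Tt hTsinv hTspos hTtpos P Pinv hP' Ωs Ωt hPΩ Z Zinv hZ hZΩ X Y
end

section
/- Let Π be an invertible operator with Π Ω_s = Ω_t, (Π⁻¹)† Ω_s = Ω_t, and define the dual transport Π⋆ = T_t⁻² (Π⁻¹)† T_s². Then for all bounded operators X, Y one has (Π̂ X, Π̂⋆ Y)_t = (X, Y)_s, where Π̂ X = Π X Π⁻¹, Π̂⋆ Y = Π⋆ Y (Π⋆)⁻¹ and (A,B)_θ = ⟨T_θ A Ω_θ, T_θ B Ω_θ⟩. -/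
/-!
Since `Π⁻¹ Ω_t = Ω_s` and `Π⋆ Ω_s = Ω_t`, the conjugated operators act on the reference vector as
`Π̂ X Ω_t = Π X Ω_s` and `Π̂⋆ Y Ω_t = Π⋆ Y Ω_s`. What remains is that `Π⋆` is the adjoint of `Π⁻¹`
between the inner products `⟪T_s ·, T_s ·⟫` and `⟪T_t ·, T_t ·⟫`, which follows from the
self-adjointness of `T_s` and `T_t`: the factor `T_t⁻²` cancels the two `T_t`, and `T_s²` splits
into one `T_s` on each side.
-/

open ContinuousLinearMap

namespace ContinuousLinearMap

variable {𝕜 : Type*} [RCLike 𝕜] {E : Type*} [NormedAddCommGroup E] [InnerProductSpace 𝕜 E]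

theorem conj_apply_apply {R M : Type*} [Semiring R] [AddCommMonoid M] [Module R M]
    [TopologicalSpace M] {Q Qinv : M →L[R] M} (hQ : Qinv ∘L Q = 1) (X : M →L[R] M) (v : M) :
    (Q ∘L X ∘L Qinv) (Q v) = Q (X v) := by
  rw [comp_apply, comp_apply, ← comp_apply Qinv Q, hQ, one_apply_eq_self]

theorem inner_apply_apply_rightInverse_sq {T S : E →L[𝕜] E}
    (hT : (T : E →ₗ[𝕜] E).IsSymmetric) (hTS : T ∘L S = 1) (x y : E) :
    inner 𝕜 (T x) (T (S (S y))) = inner 𝕜 x y := by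
  have hTS_apply (z : E) : T (S z) = z := by rw [← comp_apply T S, hTS, one_apply_eq_self]
  calc inner 𝕜 (T x) (T (S (S y))) = inner 𝕜 (T x) (S y) := by rw [hTS_apply]
    _ = inner 𝕜 x (T (S y)) := hT x (S y)
    _ = inner 𝕜 x y := by rw [hTS_apply]

theorem inner_apply_dualTransport [CompleteSpace E] {Ts Tt Ttinv P Pinv : E →L[𝕜] E}
    (hTs : (Ts : E →ₗ[𝕜] E).IsSymmetric) (hTt : (Tt : E →ₗ[𝕜] E).IsSymmetric)
    (hTtinv : Tt ∘L Ttinv = 1) (hP : Pinv ∘L P = 1) (x y : E) :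
    inner 𝕜 (Tt (P x)) (Tt ((Ttinv ∘L Ttinv ∘L adjoint Pinv ∘L Ts ∘L Ts) y)) =
      inner 𝕜 (Ts x) (Ts y) := by
  simp only [comp_apply]
  rw [inner_apply_apply_rightInverse_sq hTt hTtinv, ← adjoint_inner_left, adjoint_adjoint,
    ← comp_apply Pinv P, hP, one_apply_eq_self]
  exact (hTs x (Ts y)).symm

end ContinuousLinearMap

theorem stmt_2_general {H : Type*} [NormedAddCommGroup H] [InnerProductSpace ℂ H] [CompleteSpace H]
    (Ts Tt Ttinv : H →L[ℂ] H)
    (hTtinv : Tt ∘L Ttinv = 1) (hTtinv' : Ttinv ∘L Tt = 1)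
    (hTspos : Ts.IsPositive) (hTtpos : Tt.IsPositive)
    (Ωs Ωt : H)
    (hTsΩ : Ts Ωs = Ωs) (hTtΩ : Tt Ωt = Ωt)
    (P Pinv : H →L[ℂ] H)
    (hP' : Pinv ∘L P = 1)
    (hPΩ : P Ωs = Ωt) (hPadjΩ : (adjoint Pinv) Ωs = Ωt)
    (Pstar Pstarinv : H →L[ℂ] H)
    (hPstar : Pstar = Ttinv ∘L Ttinv ∘L (adjoint Pinv) ∘L Ts ∘L Ts)
    (hPstarinv' : Pstarinv ∘L Pstar = 1)
    (X Y : H →L[ℂ] H) :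
    (inner ℂ (Tt ((P ∘L X ∘L Pinv) Ωt)) (Tt ((Pstar ∘L Y ∘L Pstarinv) Ωt)) : ℂ)
      = inner ℂ (Ts (X Ωs)) (Ts (Y Ωs)) := by
  have hTtinvΩ : Ttinv Ωt = Ωt := by
    rw [← hTtΩ, ← comp_apply Ttinv Tt, hTtinv', one_apply_eq_self, hTtΩ]
  have hPstarΩ : Pstar Ωs = Ωt := by
    simp only [hPstar, comp_apply, hTsΩ, hPadjΩ, hTtinvΩ]
  rw [← hPΩ, conj_apply_apply hP', hPΩ, ← hPstarΩ, conj_apply_apply hPstarinv', hPstar]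
  exact inner_apply_dualTransport hTspos.isSymmetric hTtpos.isSymmetric hTtinv hP' _ _

/-- the dual transport `Π⋆ = T_t⁻² (Π⁻¹)† T_s²` satisfies the duality
relation `(Π̂ X, Π̂⋆ Y)_t = (X, Y)_s`. -/
theorem stmt_2 {H : Type*} [NormedAddCommGroup H] [InnerProductSpace ℂ H] [CompleteSpace H]
    (Ts Tsinv Tt Ttinv : H →L[ℂ] H)
    (hTsinv : Ts ∘L Tsinv = 1) (hTsinv' : Tsinv ∘L Ts = 1)
    (hTtinv : Tt ∘L Ttinv = 1) (hTtinv' : Ttinv ∘L Tt = 1)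
    (hTspos : Ts.IsPositive) (hTtpos : Tt.IsPositive)
    (Ωs Ωt : H) (hΩs : ‖Ωs‖ = 1) (hΩt : ‖Ωt‖ = 1)
    (hTsΩ : Ts Ωs = Ωs) (hTtΩ : Tt Ωt = Ωt)
    (P Pinv : H →L[ℂ] H)
    (hP : P ∘L Pinv = 1) (hP' : Pinv ∘L P = 1)
    (hPΩ : P Ωs = Ωt) (hPadjΩ : (adjoint Pinv) Ωs = Ωt)
    (Pstar Pstarinv : H →L[ℂ] H)
    (hPstar : Pstar = Ttinv ∘L Ttinv ∘L (adjoint Pinv) ∘L Ts ∘L Ts)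
    (hPstarinv : Pstar ∘L Pstarinv = 1) (hPstarinv' : Pstarinv ∘L Pstar = 1)
    (X Y : H →L[ℂ] H) :
    (inner ℂ (Tt ((P ∘L X ∘L Pinv) Ωt)) (Tt ((Pstar ∘L Y ∘L Pstarinv) Ωt)) : ℂ)
      = inner ℂ (Ts (X Ωs)) (Ts (Y Ωs)) :=
  stmt_2_general Ts Tt Ttinv hTtinv hTtinv' hTspos hTtpos Ωs Ωt hTsΩ hTtΩ P Pinv hP' hPΩ hPadjΩ
    Pstar Pstarinv hPstar hPstarinv' X Y
end

section
/- Let Π(γ^θ_p)^t_0 be differentiable transport operators with dual Π⋆(γ)^t_s = T_{γ_t}⁻² (Π(γ)^s_t)† T_{γ_s}², and vector potentials A_p, A⋆_p obtained as directional derivatives (A_p(θ) = iℏ d/dt Π(γ_p^θ)^t_0|_{t=0}, similarly for A⋆_p). Then T_θ A⋆_p(θ) T_θ⁻¹ − T_θ⁻¹ A_p(θ)† T_θ = −iℏ T_θ⁻¹ (∂ T_θ²/∂θ^p) T_θ⁻¹. -/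
/-!
By the product rule, differentiating `Π⋆` at `t = 0` needs the derivatives of two inverses, both
given by `(F⁻¹)' = -F⁻¹ F' F⁻¹`: along the line `γ_p^θ` the factor `T⁻²` contributes
`-T⁻² (∂_p T²) T⁻²`, and `Π(γ_p^θ)^0_t` contributes `-Π'(0)`. As `iℏ` is purely imaginary,
`A_p† = -iℏ Π'(0)†`, so after conjugating `A⋆_p` by `T` the `Π'(0)†` terms cancel.
-/

open ContinuousLinearMap

theorem HasDerivAt.inverse_of_mul_eq_one {R : Type*} [NormedRing R] [NormedAlgebra ℝ R]
    [HasSummableGeomSeries R] {F G : ℝ → R} {F' : R} {x : ℝ}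
    (hF : HasDerivAt F F' x) (hGF : ∀ t, G t * F t = 1) (hFG : ∀ t, F t * G t = 1) :
    HasDerivAt G (-(G x * F' * G x)) x := by
  have hG : G = Ring.inverse ∘ F :=
    funext fun t => (Ring.inverse_unit ⟨F t, G t, hFG t, hGF t⟩).symm
  have h := (hasFDerivAt_ringInverse ⟨F x, G x, hFG x, hGF x⟩).comp_hasDerivAt x hF
  rw [← hG] at h
  simpa using h

theorem star_I_mul_ofReal_smul {E : Type*} [AddCommGroup E] [Module ℂ E] [StarAddMonoid E]
    [StarModule ℂ E] (r : ℝ) (x : E) :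
    star ((Complex.I * r) • x) = -((Complex.I * r) • star x) := by
  simp [star_smul, ← neg_smul]

theorem conj_sub_sandwich_add_eq_neg {R : Type*} [Ring R] {a b : R} (hab : a * b = 1)
    (hba : b * a = 1) (D Q : R) :
    a * ((-(b * b * D * (b * b)) - b * b * Q) * (a * a)) * b + b * Q * a = -(b * D * b) := by
  have hab' : ∀ x, a * (b * x) = x := fun x => by rw [← mul_assoc, hab, one_mul]
  have hba' : ∀ x, b * (a * x) = x := fun x => by rw [← mul_assoc, hba, one_mul]
  simp only [mul_assoc, sub_mul, mul_sub, neg_mul, mul_neg, hab, hba, hab', hba', mul_one]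
  abel

theorem stmt_14_general {n : ℕ} {H : Type*} [NormedAddCommGroup H] [InnerProductSpace ℂ H]
    [CompleteSpace H]
    (ℏ : ℝ)
    (T Tinv : (Fin n → ℝ) → (H →L[ℂ] H))
    (hT : ∀ θ, T θ * Tinv θ = 1) (hT' : ∀ θ, Tinv θ * T θ = 1)
    (hTdiff : Differentiable ℝ T)
    -- transport operators `P p θ t = Π(γ_p^θ)^t_0` and their inverses `Π(γ_p^θ)^0_t`
    (P Pinv : Fin n → (Fin n → ℝ) → ℝ → (H →L[ℂ] H))
    (hPinv0 : ∀ p θ, Pinv p θ 0 = 1)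
    (hPinv : ∀ p θ t, P p θ t * Pinv p θ t = 1)
    (hPinv' : ∀ p θ t, Pinv p θ t * P p θ t = 1)
    (hPdiff : ∀ p θ, DifferentiableAt ℝ (fun t : ℝ => P p θ t) 0)
    -- dual transport `Π⋆(γ_p^θ)^t_0 = T_{θ+tg_p}⁻² (Π(γ_p^θ)^0_t)† T_θ²`
    (Pstar : Fin n → (Fin n → ℝ) → ℝ → (H →L[ℂ] H))
    (hPstar : ∀ p θ t, Pstar p θ t
      = Tinv (θ + t • (Pi.single p 1 : Fin n → ℝ)) * Tinv (θ + t • (Pi.single p 1 : Fin n → ℝ))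
          * adjoint (Pinv p θ t) * (T θ * T θ))
    (A Astar : Fin n → (Fin n → ℝ) → (H →L[ℂ] H))
    (hA : ∀ p θ, A p θ = (Complex.I * (ℏ : ℂ)) • deriv (fun t : ℝ => P p θ t) 0)
    (hAstar : ∀ p θ, Astar p θ = (Complex.I * (ℏ : ℂ)) • deriv (fun t : ℝ => Pstar p θ t) 0)
    (θ : Fin n → ℝ) (p : Fin n) :
    T θ * Astar p θ * Tinv θ - Tinv θ * adjoint (A p θ) * T θ
      = -((Complex.I * (ℏ : ℂ))
          • (Tinv θ * fderiv ℝ (fun ϑ => T ϑ * T ϑ) θ (Pi.single p 1) * Tinv θ)) := by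
  set D := fderiv ℝ (fun ϑ => T ϑ * T ϑ) θ (Pi.single p 1)
  set P' := deriv (fun t : ℝ => P p θ t) 0
  -- `(u ϑ * u ϑ)⁻¹` unfolds to `Tinv ϑ * Tinv ϑ`, which gives both inverse identities for `T²`
  let u : (Fin n → ℝ) → (H →L[ℂ] H)ˣ := fun ϑ => ⟨T ϑ, Tinv ϑ, hT ϑ, hT' ϑ⟩
  have hTsq : HasLineDerivAt ℝ (fun ϑ => T ϑ * T ϑ) D θ (Pi.single p 1) :=
    ((hTdiff θ).mul (hTdiff θ)).hasFDerivAt.hasLineDerivAt _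
  have hTinvSq : HasLineDerivAt ℝ (fun ϑ => Tinv ϑ * Tinv ϑ)
      (-(Tinv θ * Tinv θ * D * (Tinv θ * Tinv θ))) θ (Pi.single p 1) := by
    simpa [u, HasLineDerivAt] using hTsq.inverse_of_mul_eq_one (fun t => (u _ * u _).inv_mul)
      (fun t => (u _ * u _).mul_inv)
  have hPinvDeriv : HasDerivAt (Pinv p θ) (-P') 0 := by
    simpa [hPinv0] using
      (hPdiff p θ).hasDerivAt.inverse_of_mul_eq_one (hPinv' p θ) (hPinv p θ)
  have hPstarDeriv : HasDerivAt (Pstar p θ)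
      ((-(Tinv θ * Tinv θ * D * (Tinv θ * Tinv θ)) - Tinv θ * Tinv θ * star P')
        * (T θ * T θ)) 0 := by
    have h := (hTinvSq.mul hPinvDeriv.star).mul_const (T θ * T θ)
    simp only [zero_smul, add_zero, hPinv0, star_one, mul_one, star_neg, mul_neg,
      ← sub_eq_add_neg] at h
    rwa [funext (hPstar p θ)]
  rw [hAstar, hA, hPstarDeriv.deriv, ← star_eq_adjoint ((Complex.I * (ℏ : ℂ)) • P'),
    star_I_mul_ofReal_smul]
  simp only [smul_mul_assoc, mul_smul_comm, mul_neg, neg_mul, sub_neg_eq_add, ← smul_add]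
  rw [conj_sub_sandwich_add_eq_neg (hT θ) (hT' θ), smul_neg]

/-- relation between the quantum vector potential `A_p` and its dual
`A⋆_p`:  `T A⋆_p T⁻¹ − T⁻¹ A_p† T = −iℏ T⁻¹ (∂_p T²) T⁻¹`. -/
theorem stmt_14 {n : ℕ} {H : Type*} [NormedAddCommGroup H] [InnerProductSpace ℂ H]
    [CompleteSpace H]
    (M : Set (Fin n → ℝ)) (hM : IsOpen M)
    (ℏ : ℝ) (hℏ : 0 < ℏ)
    (T Tinv : (Fin n → ℝ) → (H →L[ℂ] H))
    (hT : ∀ θ, T θ * Tinv θ = 1) (hT' : ∀ θ, Tinv θ * T θ = 1)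
    (hTsa : ∀ θ, adjoint (T θ) = T θ)
    (hTpos : ∀ θ, (T θ).IsPositive)
    (hTdiff : Differentiable ℝ T)
    -- transport operators `P p θ t = Π(γ_p^θ)^t_0` and their inverses `Π(γ_p^θ)^0_t`
    (P Pinv : Fin n → (Fin n → ℝ) → ℝ → (H →L[ℂ] H))
    (hP0 : ∀ p θ, P p θ 0 = 1) (hPinv0 : ∀ p θ, Pinv p θ 0 = 1)
    (hPinv : ∀ p θ t, P p θ t * Pinv p θ t = 1)
    (hPinv' : ∀ p θ t, Pinv p θ t * P p θ t = 1)
    (hPdiff : ∀ p θ, DifferentiableAt ℝ (fun t : ℝ => P p θ t) 0)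
    (hPinvdiff : ∀ p θ, DifferentiableAt ℝ (fun t : ℝ => Pinv p θ t) 0)
    -- dual transport `Π⋆(γ_p^θ)^t_0 = T_{θ+tg_p}⁻² (Π(γ_p^θ)^0_t)† T_θ²`
    (Pstar : Fin n → (Fin n → ℝ) → ℝ → (H →L[ℂ] H))
    (hPstar : ∀ p θ t, Pstar p θ t
      = Tinv (θ + t • (Pi.single p 1 : Fin n → ℝ)) * Tinv (θ + t • (Pi.single p 1 : Fin n → ℝ))
          * adjoint (Pinv p θ t) * (T θ * T θ))
    (A Astar : Fin n → (Fin n → ℝ) → (H →L[ℂ] H))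
    (hA : ∀ p θ, A p θ = (Complex.I * (ℏ : ℂ)) • deriv (fun t : ℝ => P p θ t) 0)
    (hAstar : ∀ p θ, Astar p θ = (Complex.I * (ℏ : ℂ)) • deriv (fun t : ℝ => Pstar p θ t) 0)
    (θ : Fin n → ℝ) (hθ : θ ∈ M) (p : Fin n) :
    T θ * Astar p θ * Tinv θ - Tinv θ * adjoint (A p θ) * T θ
      = -((Complex.I * (ℏ : ℂ))
          • (Tinv θ * fderiv ℝ (fun ϑ => T ϑ * T ϑ) θ (Pi.single p 1) * Tinv θ)) :=
  stmt_14_general ℏ T Tinv hT hT' hTdiff P Pinv hPinv0 hPinv hPinv' hPdiff Pstar hPstar A Astar hA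
    hAstar θ p
end
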